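/- arXiv:1809.06541 — 3 statements merged into one kernel-verified Lean document; each statement's English description precedes it below -/
import Mathlib

section
/- Let R be a d×d expanding integer matrix, B, L finite subsets of ℤ^d with 0 ∈ B ∩ L. For λ ∈ L define the vector e_{R,λ} = (1/√(#B)) (e^{2πi⟨R⁻¹b, λ⟩})_{b∈B} ∈ ℂ^{#B}. Then (R,B,L) forms a frame triple with bounds C ≤ D (i.e., C‖x‖² ≤ Σ_{λ∈L} |⟨x, e_{R,λ}⟩|² ≤ D‖x‖² for all x ∈ ℂ^{#B}) if and only if (Rᵀ, L, B) forms a Riesz sequence triple with bounds ((#B/#L)·C, (#B/#L)·D) (i.e., (#B/#L)·C·Σ|a_b|² ≤ ‖Σ_{b∈B} a_b e_{Rᵀ,b}‖² ≤ (#B/#L)·D·Σ|a_b|² for all (a_b) ∈ ℂ^{#B}). -/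
open Complex Matrix Finset

noncomputable section

/-- Real version of an integer matrix. -/
def realMat {d : ℕ} (R : Matrix (Fin d) (Fin d) ℤ) : Matrix (Fin d) (Fin d) ℝ :=
  R.map (Int.cast)

/-- `R` is expanding: all (complex) eigenvalues have modulus strictly greater than 1. -/
def Expanding {d : ℕ} (R : Matrix (Fin d) (Fin d) ℤ) : Prop :=
  ∀ z : ℂ, (R.map (Int.cast : ℤ → ℂ)).charpoly.IsRoot z → 1 < ‖z‖

/-- Euclidean inner product on `ℝ^d`. -/
def ip {d : ℕ} (x y : Fin d → ℝ) : ℝ := ∑ i, x i * y i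

/-- The vector `e_{R,λ} = (1/√#B) (e^{2πi⟨R⁻¹b,λ⟩})_{b∈B} ∈ ℂ^{#B}`. -/
def eVec {d : ℕ} (R : Matrix (Fin d) (Fin d) ℤ) (B : Finset (Fin d → ℤ))
    (lam : Fin d → ℤ) : B → ℂ :=
  fun b => ((Real.sqrt B.card : ℂ))⁻¹ *
    Complex.exp (2 * Real.pi * Complex.I *
      (ip ((realMat R)⁻¹ *ᵥ (fun j => ((b : Fin d → ℤ) j : ℝ))) (fun i => (lam i : ℝ))))

/-- `(R,B,L)` is a frame triple with bounds `C ≤ D`. -/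
def IsFrameTriple {d : ℕ} (R : Matrix (Fin d) (Fin d) ℤ) (B L : Finset (Fin d → ℤ))
    (C D : ℝ) : Prop :=
  ∀ x : B → ℂ,
    C * ∑ b, ‖x b‖ ^ 2 ≤ ∑ lam ∈ L, ‖∑ b, x b * (starRingEnd ℂ) (eVec R B lam b)‖ ^ 2 ∧
    ∑ lam ∈ L, ‖∑ b, x b * (starRingEnd ℂ) (eVec R B lam b)‖ ^ 2 ≤ D * ∑ b, ‖x b‖ ^ 2

/-- `(R,B,L)` is a Riesz sequence triple with bounds `C ≤ D`. -/
def IsRieszTriple {d : ℕ} (R : Matrix (Fin d) (Fin d) ℤ) (B L : Finset (Fin d → ℤ))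
    (C D : ℝ) : Prop :=
  ∀ a : L → ℂ,
    C * ∑ lam, ‖a lam‖ ^ 2 ≤ ∑ b, ‖∑ lam, a lam * eVec R B lam b‖ ^ 2 ∧
    ∑ b, ‖∑ lam, a lam * eVec R B lam b‖ ^ 2 ≤ D * ∑ lam, ‖a lam‖ ^ 2

/-! Since `⟨R⁻¹b, λ⟩ = ⟨(Rᵀ)⁻¹λ, b⟩`, the matrices `(e_{Rᵀ,b}(λ))` and `(e_{R,λ}(b))` agree up to
the factor `√#B / √#L`. Hence the Riesz sum of `(Rᵀ, L, B)` at the coefficients `conj x` is `#B / #L`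
times the frame sum of `(R, B, L)` at `x`, and conjugation preserves `∑ |x_b|²`. -/

lemma ip_mulVec_transpose {d : ℕ} (M : Matrix (Fin d) (Fin d) ℝ) (x y : Fin d → ℝ) :
    ip (Mᵀ *ᵥ x) y = ip (M *ᵥ y) x := by
  change (Mᵀ *ᵥ x) ⬝ᵥ y = (M *ᵥ y) ⬝ᵥ x
  rw [Matrix.mulVec_transpose, ← Matrix.dotProduct_mulVec, dotProduct_comm]

lemma realMat_transpose {d : ℕ} (R : Matrix (Fin d) (Fin d) ℤ) :
    realMat Rᵀ = (realMat R)ᵀ :=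
  Matrix.transpose_map.symm

lemma eVec_transpose {d : ℕ} (R : Matrix (Fin d) (Fin d) ℤ) (B L : Finset (Fin d → ℤ))
    (b : B) (l : L) :
    eVec Rᵀ L b l = ((Real.sqrt B.card / Real.sqrt L.card : ℝ) : ℂ) * eVec R B l b := by
  have hB : (Real.sqrt B.card : ℂ) ≠ 0 := by
    have : (0 : ℝ) < B.card := by exact_mod_cast Finset.card_pos.2 ⟨b.1, b.2⟩
    exact_mod_cast (Real.sqrt_pos.2 this).ne'
  unfold eVec
  rw [realMat_transpose, ← Matrix.transpose_nonsing_inv, ip_mulVec_transpose]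
  push_cast
  field_simp

lemma sum_mul_eVec_transpose {d : ℕ} (R : Matrix (Fin d) (Fin d) ℤ)
    (B L : Finset (Fin d → ℤ)) (a : B → ℂ) (l : L) :
    ∑ b, a b * eVec Rᵀ L b l =
      ((Real.sqrt B.card / Real.sqrt L.card : ℝ) : ℂ) * ∑ b, a b * eVec R B l b := by
  rw [Finset.mul_sum]
  exact Finset.sum_congr rfl fun b _ => by rw [eVec_transpose]; ring

lemma sum_norm_sq_sum_eVec_transpose {d : ℕ} (R : Matrix (Fin d) (Fin d) ℤ)
    (B L : Finset (Fin d → ℤ)) (x : B → ℂ) :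
    ∑ l : L, ‖∑ b, star x b * eVec Rᵀ L b l‖ ^ 2 =
      (B.card / L.card : ℝ) * ∑ l ∈ L, ‖∑ b, x b * starRingEnd ℂ (eVec R B l b)‖ ^ 2 := by
  have hconj (l : Fin d → ℤ) : ∑ b, star x b * eVec R B l b =
      starRingEnd ℂ (∑ b, x b * starRingEnd ℂ (eVec R B l b)) := by
    simp [map_sum, Pi.star_apply]
  have hscale : ‖((Real.sqrt B.card / Real.sqrt L.card : ℝ) : ℂ)‖ ^ 2 = B.card / L.card := by
    rw [Complex.norm_real, Real.norm_eq_abs, sq_abs, div_pow,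
      Real.sq_sqrt (Nat.cast_nonneg _), Real.sq_sqrt (Nat.cast_nonneg _)]
  simp only [sum_mul_eVec_transpose, norm_mul, mul_pow, hscale, hconj, RCLike.norm_conj]
  rw [← Finset.mul_sum]
  exact congrArg _ (Finset.sum_coe_sort L fun l => ‖∑ b, x b * starRingEnd ℂ (eVec R B l b)‖ ^ 2)

lemma bounds_iff_of_star_eq_mul {ι : Type*} [Fintype ι] {S T : (ι → ℂ) → ℝ} {q : ℝ}
    (hq : 0 < q) (hST : ∀ x, T (star x) = q * S x) (C D : ℝ) :
    (∀ x, C * ∑ i, ‖x i‖ ^ 2 ≤ S x ∧ S x ≤ D * ∑ i, ‖x i‖ ^ 2) ↔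
      ∀ a, q * C * ∑ i, ‖a i‖ ^ 2 ≤ T a ∧ T a ≤ q * D * ∑ i, ‖a i‖ ^ 2 := by
  have hnorm (x : ι → ℂ) : ∑ i, ‖star x i‖ ^ 2 = ∑ i, ‖x i‖ ^ 2 := by
    simp [Pi.star_apply]
  constructor
  · intro h a
    have hT : T a = q * S (star a) := by rw [← hST, star_star]
    rw [hT, mul_assoc, mul_assoc, mul_le_mul_iff_right₀ hq, mul_le_mul_iff_right₀ hq, ← hnorm a]
    exact h (star a)
  · intro h x
    have := h (star x)
    rwa [hST, hnorm, mul_assoc, mul_assoc, mul_le_mul_iff_right₀ hq,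
      mul_le_mul_iff_right₀ hq] at this

theorem frame_triple_iff_riesz_triple_dual_general {d : ℕ}
    (R : Matrix (Fin d) (Fin d) ℤ)
    (B L : Finset (Fin d → ℤ)) (hB : (0 : Fin d → ℤ) ∈ B) (hL : (0 : Fin d → ℤ) ∈ L)
    (C D : ℝ) :
    IsFrameTriple R B L C D ↔
      IsRieszTriple Rᵀ L B ((B.card / L.card : ℝ) * C) ((B.card / L.card : ℝ) * D) := by
  have hq : (0 : ℝ) < B.card / L.card :=
    div_pos (by exact_mod_cast Finset.card_pos.2 ⟨0, hB⟩)
      (by exact_mod_cast Finset.card_pos.2 ⟨0, hL⟩)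
  exact bounds_iff_of_star_eq_mul hq (sum_norm_sq_sum_eVec_transpose R B L) C D

theorem frame_triple_iff_riesz_triple_dual {d : ℕ}
    (R : Matrix (Fin d) (Fin d) ℤ) (hR : Expanding R)
    (B L : Finset (Fin d → ℤ)) (hB : (0 : Fin d → ℤ) ∈ B) (hL : (0 : Fin d → ℤ) ∈ L)
    (C D : ℝ) (hCD : C ≤ D) :
    IsFrameTriple R B L C D ↔
      IsRieszTriple Rᵀ L B ((B.card / L.card : ℝ) * C) ((B.card / L.card : ℝ) * D) :=
  frame_triple_iff_riesz_triple_dual_general R B L hB hL C D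

end
end

section
/- Let μ = δ_{𝐑_1⁻¹B_1} ∗ δ_{𝐑_2⁻¹B_2} ∗ ⋯ be an infinite convolution of uniform atomic measures satisfying the no-overlap condition, with μ = μ_n ∗ μ_{>n}. If f = Σ_{𝐛∈𝐁_n} w_𝐛 1_{K_{𝐛,n}} is a step function adapted to level n, then for every λ ∈ ℝ^d: ∫ f(x) e^{-2πi⟨λ,x⟩} dμ(x) = (1/#𝐁_n) · μ̂_{>n}(λ) · Σ_{𝐛∈𝐁_n} w_𝐛 e^{-2πi⟨𝐑_n⁻¹𝐛, λ⟩}, and moreover ∫ |f|² dμ = (1/#𝐁_n) Σ_{𝐛∈𝐁_n} |w_𝐛|². -/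
open Complex Matrix Finset

noncomputable section

/-- `𝐑_n = R_n ⋯ R_1` (with 0-based indexing: `bigR R n = R (n-1) * ⋯ * R 0`). -/
def bigR {d : ℕ} (R : ℕ → Matrix (Fin d) (Fin d) ℤ) : ℕ → Matrix (Fin d) (Fin d) ℤ
  | 0 => 1
  | n + 1 => R n * bigR R n

def castVec {d : ℕ} (v : Fin d → ℤ) : Fin d → ℝ := fun i => (v i : ℝ)

/-- The point `𝐑_n⁻¹𝐛 = ∑_{k=1}^n 𝐑_k⁻¹ b_k` associated to a digit tuple. -/
def tuplePoint {d n : ℕ} (R : ℕ → Matrix (Fin d) (Fin d) ℤ) (B : ℕ → Finset (Fin d → ℤ))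
    (t : (j : Fin n) → (B (j : ℕ))) : Fin d → ℝ :=
  ∑ j : Fin n, (realMat (bigR R ((j : ℕ) + 1)))⁻¹ *ᵥ castVec (t j)

/-- The frequency `λ = ∑_{k=1}^n (R_1ᵀ⋯R_{k-1}ᵀ) l_k ∈ Λ_n` associated to a tuple. -/
def tupleFreq {d n : ℕ} (R : ℕ → Matrix (Fin d) (Fin d) ℤ) (L : ℕ → Finset (Fin d → ℤ))
    (l : (j : Fin n) → (L (j : ℕ))) : Fin d → ℤ :=
  ∑ j : Fin n, (bigR R (j : ℕ))ᵀ *ᵥ ((l j : Fin d → ℤ))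

/-- The concatenated exponential vector entry
`(1/√(∏ #B_j)) e^{2πi ⟨𝐑_n⁻¹𝐛, λ⟩}` for the triple `(𝐑_n, 𝐁_n, Λ_n)`. -/
def bigEVec {d n : ℕ} (R : ℕ → Matrix (Fin d) (Fin d) ℤ) (B L : ℕ → Finset (Fin d → ℤ))
    (t : (j : Fin n) → (B (j : ℕ))) (l : (j : Fin n) → (L (j : ℕ))) : ℂ :=
  ((Real.sqrt (∏ j ∈ Finset.range n, ((B j).card : ℝ)) : ℂ))⁻¹ *
    Complex.exp (2 * Real.pi * Complex.I *
      (ip (tuplePoint R B t) (castVec (tupleFreq R L l))))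


open MeasureTheory

/-- The level-`n` measure `μ_n = δ_{𝐑_1⁻¹B_1} ∗ ⋯ ∗ δ_{𝐑_n⁻¹B_n}`, realized as the uniform
measure on the points `∑_{k=1}^n 𝐑_k⁻¹ b_k`, `b_k ∈ B_k`. -/
def muLevel {d : ℕ} (R : ℕ → Matrix (Fin d) (Fin d) ℤ) (B : ℕ → Finset (Fin d → ℤ))
    (n : ℕ) : Measure (Fin d → ℝ) :=
  (∏ j ∈ Finset.range n, ((B j).card : ENNReal))⁻¹ •
    ∑ t : (j : Fin n) → (B (j : ℕ)), Measure.dirac (tuplePoint R B t)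

/-- The tail attractor `K_n = {∑_{k=n+1}^∞ 𝐑_k⁻¹ b_k : b_k ∈ B_k}`. -/
def tailSet {d : ℕ} (R : ℕ → Matrix (Fin d) (Fin d) ℤ) (B : ℕ → Finset (Fin d → ℤ))
    (n : ℕ) : Set (Fin d → ℝ) :=
  {x | ∃ b : ℕ → (Fin d → ℤ), (∀ k, b k ∈ B (n + k)) ∧
    x = ∑' k : ℕ, (realMat (bigR R (n + k + 1)))⁻¹ *ᵥ castVec (b k)}

/-- The cell `K_{𝐛,n} = 𝐑_n⁻¹𝐛 + K_n` attached to a digit tuple `𝐛 ∈ 𝐁_n`. -/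
def cell {d n : ℕ} (R : ℕ → Matrix (Fin d) (Fin d) ℤ) (B : ℕ → Finset (Fin d → ℤ))
    (t : (j : Fin n) → (B (j : ℕ))) : Set (Fin d → ℝ) :=
  (fun y => tuplePoint R B t + y) '' tailSet R B n

/-- The no-overlap condition for `μ`. -/
def NoOverlap {d : ℕ} (R : ℕ → Matrix (Fin d) (Fin d) ℤ) (B : ℕ → Finset (Fin d → ℤ))
    (μ : Measure (Fin d → ℝ)) : Prop :=
  ∀ (n : ℕ) (t t' : (j : Fin n) → (B (j : ℕ))), t ≠ t' →
    μ (cell R B t ∩ cell R B t') = 0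

/-- The Fourier transform `μ̂(y) = ∫ e^{-2πi⟨y,x⟩} dμ(x)`. -/
def fourierTf {d : ℕ} (μ : Measure (Fin d → ℝ)) (y : Fin d → ℝ) : ℂ :=
  ∫ x, Complex.exp (-(2 * Real.pi * Complex.I) * (ip y x)) ∂μ

/-!
Since `μ = μ_n ∗ ν`, integrating against `μ` averages over the `#𝐁_n` translates of `ν` by the
points `𝐑_n⁻¹𝐛`. As `ν` lives on `K_n`, the translate by `𝐑_n⁻¹𝐛` lives on `K_{𝐛,n}`, and the
no-overlap condition (at level `n`) says it gives no mass to the other cells. So on that translate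
`f = w_𝐛` almost everywhere, and both integrals reduce to `e(𝐑_n⁻¹𝐛 + y) = e(𝐑_n⁻¹𝐛) e(y)` for the
character `e` and to `ν(ℝ^d) = 1`.
-/

open scoped ENNReal

namespace MeasureTheory.Measure

variable {M : Type*} [AddMonoid M] [MeasurableSpace M] [MeasurableAdd₂ M]

theorem sum_conv {ι : Type*} (μ : ι → Measure M) (ν : Measure M) [SFinite ν] :
    Measure.sum μ ∗ ν = Measure.sum fun i => μ i ∗ ν := by
  rw [conv, prod_sum_left, map_sum (by fun_prop)]
  rfl

theorem finset_sum_dirac_conv {ι : Type*} [Fintype ι] (p : ι → M) (ν : Measure M) [SFinite ν] :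
    (∑ i, dirac (p i)) ∗ ν = ∑ i, ν.map (p i + ·) := by
  simp only [← sum_fintype, sum_conv, dirac_conv]

end MeasureTheory.Measure

section Translates

variable {M : Type*} [AddGroup M] [MeasurableSpace M] {ι : Type*} [Fintype ι]
  {p : ι → M} {ν : Measure M}

theorem integral_smul_sum_map_add [MeasurableAdd M] {E : Type*} [NormedAddCommGroup E]
    [NormedSpace ℝ E] (c : ℝ≥0∞) {g : M → E} (hg : ∀ i, Integrable (fun y => g (p i + y)) ν) :
    ∫ x, g x ∂(c • ∑ i, ν.map (p i + ·)) = c.toReal • ∑ i, ∫ y, g (p i + y) ∂ν := by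
  have hmap : ∀ i, ν.map (p i + ·) = ν.map (MeasurableEquiv.addLeft (p i)) := fun i => rfl
  rw [integral_smul_measure, integral_finsetSum_measure fun i _ => ?_]
  · simp only [hmap, integral_map_equiv]
    rfl
  · rw [hmap, integrable_map_equiv]
    exact hg i

theorem measure_preimage_add_eq_zero_of_smul_sum [MeasurableAdd M] {c : ℝ≥0∞} (hc : c ≠ 0)
    {S : Set M} (hS : (c • ∑ i, ν.map (p i + ·)) S = 0) (i : ι) : ν ((p i + ·) ⁻¹' S) = 0 := by
  have hmap : ν.map (MeasurableEquiv.addLeft (p i)) S = 0 := by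
    simp only [Measure.smul_apply, Measure.coe_finsetSum, Finset.sum_apply, smul_eq_mul,
      mul_eq_zero, hc, false_or, Finset.sum_eq_zero_iff, Finset.mem_univ, true_implies] at hS
    exact hS i
  rwa [MeasurableEquiv.map_apply] at hmap

theorem ae_add_mem_image_add_iff {K : Set M} (hK : ν Kᶜ = 0)
    (hoverlap : ∀ i j, i ≠ j → ν ((p i + ·) ⁻¹' ((p i + ·) '' K ∩ (p j + ·) '' K)) = 0)
    (i : ι) : ∀ᵐ y ∂ν, ∀ j, p i + y ∈ (p j + ·) '' K ↔ j = i := by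
  rw [ae_all_iff]
  intro j
  have hKae : ∀ᵐ y ∂ν, y ∈ K := ae_iff.2 hK
  rcases eq_or_ne j i with rfl | hji
  · filter_upwards [hKae] with y hy
    exact iff_of_true ⟨y, hy, rfl⟩ rfl
  · filter_upwards [hKae, measure_eq_zero_iff_ae_notMem.1 (hoverlap i j hji.symm)] with y hy hy'
    simp only [hji, iff_false]
    exact fun h => hy' ⟨⟨y, hy, rfl⟩, h⟩

theorem ae_sum_mul_indicator_image_add {R : Type*} [NonAssocSemiring R] {K : Set M}
    (hK : ν Kᶜ = 0)
    (hoverlap : ∀ i j, i ≠ j → ν ((p i + ·) ⁻¹' ((p i + ·) '' K ∩ (p j + ·) '' K)) = 0)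
    (w : ι → R) (i : ι) :
    ∀ᵐ y ∂ν, ∑ j, w j * ((p j + ·) '' K).indicator (fun _ => (1 : R)) (p i + y) = w i := by
  filter_upwards [ae_add_mem_image_add_iff hK hoverlap i] with y hy
  rw [Finset.sum_eq_single_of_mem i (Finset.mem_univ i) fun j _ hji => ?_]
  · rw [Set.indicator_of_mem ((hy i).2 rfl), mul_one]
  · rw [Set.indicator_of_notMem (mt (hy j).1 hji), mul_zero]

end Translates

section StepFunctions

variable {d n : ℕ} (R : ℕ → Matrix (Fin d) (Fin d) ℤ) (B : ℕ → Finset (Fin d → ℤ))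

theorem muLevel_conv (ν : Measure (Fin d → ℝ)) [SFinite ν] :
    muLevel R B n ∗ ν = (∏ j ∈ Finset.range n, ((B j).card : ℝ≥0∞))⁻¹ •
      ∑ t : (j : Fin n) → (B (j : ℕ)), ν.map (tuplePoint R B t + ·) := by
  rw [muLevel, Measure.conv_smul_left, Measure.finset_sum_dirac_conv]

variable {R B}

theorem ae_sum_mul_indicator_cell_tuplePoint_add {ν : Measure (Fin d → ℝ)} [SFinite ν]
    (hν : ν ((tailSet R B n)ᶜ) = 0) (hno : NoOverlap R B (muLevel R B n ∗ ν))
    (w : ((j : Fin n) → (B (j : ℕ))) → ℂ) (t : (j : Fin n) → (B (j : ℕ))) :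
    ∀ᵐ y ∂ν, ∑ t', w t' * (cell R B t').indicator (fun _ => (1 : ℂ)) (tuplePoint R B t + y) =
      w t := by
  refine ae_sum_mul_indicator_image_add hν (fun t t' htt' => ?_) w t
  have hweight : (∏ j ∈ Finset.range n, ((B j).card : ℝ≥0∞))⁻¹ ≠ 0 :=
    ENNReal.inv_ne_zero.2 (ENNReal.prod_ne_top fun _ _ => ENNReal.natCast_ne_top _)
  have hcell := hno n t t' htt'
  rw [muLevel_conv] at hcell
  exact measure_preimage_add_eq_zero_of_smul_sum hweight hcell t

end StepFunctions

theorem ip_add_right {d : ℕ} (x y z : Fin d → ℝ) : ip x (y + z) = ip x y + ip x z :=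
  dotProduct_add x y z

theorem ip_comm {d : ℕ} (x y : Fin d → ℝ) : ip x y = ip y x :=
  dotProduct_comm x y

@[fun_prop]
theorem continuous_ip_right {d : ℕ} (x : Fin d → ℝ) : Continuous fun y => ip x y := by
  unfold ip
  fun_prop

theorem norm_exp_neg_two_pi_I_mul_ofReal (r : ℝ) :
    ‖Complex.exp (-(2 * Real.pi * Complex.I) * r)‖ = 1 := by
  rw [show -(2 * Real.pi * Complex.I) * r = ((-(2 * Real.pi * r) : ℝ) : ℂ) * Complex.I by
    push_cast; ring, Complex.norm_exp_ofReal_mul_I]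

theorem integrable_and_integral_mul_exp_ip_of_ae_eq {d : ℕ} {ν : Measure (Fin d → ℝ)}
    [IsFiniteMeasure ν] {g : (Fin d → ℝ) → ℂ} {p : Fin d → ℝ} {a : ℂ}
    (hg : ∀ᵐ y ∂ν, g (p + y) = a) (lam : Fin d → ℝ) :
    Integrable (fun y => g (p + y) * Complex.exp (-(2 * Real.pi * Complex.I) * ip lam (p + y))) ν ∧
      ∫ y, g (p + y) * Complex.exp (-(2 * Real.pi * Complex.I) * ip lam (p + y)) ∂ν =
        a * Complex.exp (-(2 * Real.pi * Complex.I) * ip lam p) * fourierTf ν lam := by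
  set e : (Fin d → ℝ) → ℂ := fun x => Complex.exp (-(2 * Real.pi * Complex.I) * ip lam x)
  have he_add : ∀ y, e (p + y) = e p * e y := fun y => by
    simp only [e, ip_add_right, Complex.ofReal_add, mul_add, Complex.exp_add]
  have hae : (fun y => g (p + y) * e (p + y)) =ᵐ[ν] fun y => a * e p * e y :=
    hg.mono fun y hy => by simp only [hy, he_add, mul_assoc]
  have he_cont : Continuous e := by
    simp only [e]
    fun_prop
  refine ⟨?_, ?_⟩
  · refine (Integrable.of_bound (by fun_prop) ‖a * e p‖ (ae_of_all _ fun y => ?_)).congr hae.symm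
    rw [norm_mul _ (e y), norm_exp_neg_two_pi_I_mul_ofReal, mul_one]
  · rw [integral_congr_ae hae, integral_const_mul]
    rfl

theorem step_function_fourier_coefficients_general {d n : ℕ}
    (R : ℕ → Matrix (Fin d) (Fin d) ℤ) (B : ℕ → Finset (Fin d → ℤ))
    (μ ν : Measure (Fin d → ℝ)) [IsProbabilityMeasure ν]
    (hν : ν ((tailSet R B n)ᶜ) = 0)
    (hconv : μ = Measure.conv (muLevel R B n) ν)
    (hno : NoOverlap R B μ)
    (w : ((j : Fin n) → (B (j : ℕ))) → ℂ)
    (f : (Fin d → ℝ) → ℂ)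
    (hf : f = fun x => ∑ t, w t * Set.indicator (cell R B t) (fun _ => (1 : ℂ)) x) :
    (∀ lam : Fin d → ℝ,
      ∫ x, f x * Complex.exp (-(2 * Real.pi * Complex.I) * ip lam x) ∂μ =
        ((∏ j ∈ Finset.range n, ((B j).card : ℂ)))⁻¹ * fourierTf ν lam *
          ∑ t, w t * Complex.exp (-(2 * Real.pi * Complex.I) * ip (tuplePoint R B t) lam)) ∧
    ∫ x, ‖f x‖ ^ 2 ∂μ =
      ((∏ j ∈ Finset.range n, ((B j).card : ℝ)))⁻¹ * ∑ t, ‖w t‖ ^ 2 := by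
  have hstep : ∀ t, ∀ᵐ y ∂ν, f (tuplePoint R B t + y) = w t := by
    subst hf
    exact ae_sum_mul_indicator_cell_tuplePoint_add hν (hconv ▸ hno) w
  have hweight : ((∏ j ∈ Finset.range n, ((B j).card : ℝ≥0∞))⁻¹).toReal =
      (∏ j ∈ Finset.range n, ((B j).card : ℝ))⁻¹ := by
    simp [ENNReal.toReal_prod]
  rw [hconv, muLevel_conv]
  refine ⟨fun lam => ?_, ?_⟩
  · have h := fun t => integrable_and_integral_mul_exp_ip_of_ae_eq (hstep t) lam
    rw [integral_smul_sum_map_add _ fun t => (h t).1, hweight,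
      Finset.sum_congr rfl fun t _ => (h t).2, ← Finset.sum_mul]
    simp only [ip_comm lam, Complex.real_smul]
    push_cast
    ring
  · have hsq : ∀ t, (fun y => ‖f (tuplePoint R B t + y)‖ ^ 2) =ᵐ[ν] fun _ => ‖w t‖ ^ 2 :=
      fun t => (hstep t).mono fun y hy => by simp only [hy]
    rw [integral_smul_sum_map_add _ fun t => (integrable_const _).congr (hsq t).symm, hweight]
    simp only [integral_congr_ae (hsq _), integral_const, probReal_univ, smul_eq_mul, one_mul]

theorem step_function_fourier_coefficients {d n : ℕ}
    (R : ℕ → Matrix (Fin d) (Fin d) ℤ) (B : ℕ → Finset (Fin d → ℤ))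
    (hexp : ∀ j, Expanding (R j)) (hBne : ∀ j, (B j).Nonempty)
    (μ ν : Measure (Fin d → ℝ)) [IsProbabilityMeasure μ] [IsProbabilityMeasure ν]
    (hν : ν ((tailSet R B n)ᶜ) = 0)
    (hconv : μ = Measure.conv (muLevel R B n) ν)
    (hno : NoOverlap R B μ)
    (w : ((j : Fin n) → (B (j : ℕ))) → ℂ)
    (f : (Fin d → ℝ) → ℂ)
    (hf : f = fun x => ∑ t, w t * Set.indicator (cell R B t) (fun _ => (1 : ℂ)) x) :
    (∀ lam : Fin d → ℝ,
      ∫ x, f x * Complex.exp (-(2 * Real.pi * Complex.I) * ip lam x) ∂μ =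
        ((∏ j ∈ Finset.range n, ((B j).card : ℂ)))⁻¹ * fourierTf ν lam *
          ∑ t, w t * Complex.exp (-(2 * Real.pi * Complex.I) * ip (tuplePoint R B t) lam)) ∧
    ∫ x, ‖f x‖ ^ 2 ∂μ =
      ((∏ j ∈ Finset.range n, ((B j).card : ℝ)))⁻¹ * ∑ t, ‖w t‖ ^ 2 :=
  step_function_fourier_coefficients_general R B μ ν hν hconv hno w f hf
end
end

section
/- Let Λ_k ⊂ ℝ^d be sets with Λ_k ⊂ B(0, h_k) where h_k = √d·ρ^{k(k+1)/2+1} for some ρ > 1, and suppose #Λ_k ≥ N^{k(k+1)/2}/(k!)⁵ where N = ρ^α (i.e., α = log_ρ N), N ≥ 2. Then for every η > 0, limsup_{k→∞} #Λ_k / h_k^{α−η} = +∞. Consequently, if Λ = ⋃_k Λ_k, then the Beurling dimension of Λ, defined as sup{s : limsup_{h→∞} sup_x #(Λ ∩ B(x,h))/h^s > 0}, is at least α. -/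
open Filter Metric
open scoped ENNReal ENat

noncomputable section

/-- Superexponential growth beats factorial powers. -/
lemma aux_tendsto_pow_tri_div_factorial {b : ℝ} (hb : 1 < b) :
    Filter.Tendsto (fun k : ℕ => b ^ (k * (k + 1) / 2) / ((Nat.factorial k : ℕ) : ℝ) ^ 5)
      Filter.atTop Filter.atTop := by
  have hb0 : 0 < b := lt_trans one_pos hb
  have hinv : |b⁻¹| < 1 := by
    rw [abs_of_pos (by positivity)]
    exact inv_lt_one_of_one_lt₀ hb
  have h0 := (tendsto_pow_const_mul_const_pow_of_abs_lt_one 10 hinv).eventually_lt_const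
    (by norm_num : (0:ℝ) < 1/4)
  have hev : ∀ᶠ k : ℕ in atTop, (2:ℝ) ^ k ≤ b ^ (k * (k + 1) / 2) / ((Nat.factorial k : ℕ) : ℝ) ^ 5 := by
    filter_upwards [h0, Filter.eventually_ge_atTop 1] with k hk hk1
    have hkR : (0:ℝ) < (k:ℝ) := by exact_mod_cast hk1
    -- from hk : (k:ℝ)^10 * b⁻¹ ^ k < 1/4 get 4 * k^10 ≤ b^k
    have h4 : 4 * (k:ℝ) ^ 10 ≤ b ^ k := by
      have hbk : (0:ℝ) < b ^ k := by positivity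
      have h' : (k:ℝ) ^ 10 * (b ^ k)⁻¹ ≤ 1/4 := by rw [← inv_pow]; exact hk.le
      rw [mul_inv_le_iff₀ hbk] at h'
      linarith
    -- factorial bound
    have hfact : ((Nat.factorial k : ℕ) : ℝ) ^ 5 ≤ ((k:ℝ) ^ k) ^ 5 := by
      have : ((Nat.factorial k : ℕ) : ℝ) ≤ (k:ℝ) ^ k := by
        exact_mod_cast Nat.factorial_le_pow k
      exact pow_le_pow_left₀ (by positivity) this 5
    have hfpos : (0:ℝ) < ((Nat.factorial k : ℕ) : ℝ) ^ 5 := by positivity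
    set g : ℝ := b ^ (k * (k + 1) / 2) / ((k:ℝ) ^ k) ^ 5 with hg
    have hstep1 : g ≤ b ^ (k * (k + 1) / 2) / ((Nat.factorial k : ℕ) : ℝ) ^ 5 :=
      div_le_div_of_nonneg_left (by positivity) hfpos hfact
    -- show 2^k ≤ g via squares
    have hgsq : ((2:ℝ) ^ k) ^ 2 ≤ g ^ 2 := by
      have htri : k * (k + 1) / 2 * 2 = k * (k + 1) :=
        Nat.div_mul_cancel (Nat.even_mul_succ_self k).two_dvd
      have e1 : g ^ 2 = b ^ (k * (k + 1)) / ((k:ℝ) ^ 10) ^ k := by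
        rw [hg, div_pow, ← pow_mul, ← pow_mul, htri]
        congr 1
        rw [← pow_mul, ← pow_mul]
        ring_nf
      rw [e1]
      have hknum : (4 * (k:ℝ) ^ 10) ^ k ≤ b ^ (k * (k + 1)) := by
        calc (4 * (k:ℝ) ^ 10) ^ k ≤ (b ^ k) ^ k := pow_le_pow_left₀ (by positivity) h4 k
          _ = b ^ (k * k) := by rw [← pow_mul]
          _ ≤ b ^ (k * (k + 1)) := pow_le_pow_right₀ hb.le (by nlinarith)
      have hkpos : (0:ℝ) < ((k:ℝ) ^ 10) ^ k := by positivity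
      rw [le_div_iff₀ hkpos]
      calc ((2:ℝ) ^ k) ^ 2 * ((k:ℝ) ^ 10) ^ k = (4 * (k:ℝ) ^ 10) ^ k := by
            rw [mul_pow, ← pow_mul, mul_comm k 2, pow_mul]; norm_num
        _ ≤ b ^ (k * (k + 1)) := hknum
    have hgle : (2:ℝ) ^ k ≤ g := by
      have h2 : (0:ℝ) ≤ 2 ^ k := by positivity
      have hgnn : (0:ℝ) ≤ g := by positivity
      nlinarith [hgsq]
    exact hgle.trans hstep1
  exact Filter.tendsto_atTop_mono' _ hev (tendsto_pow_atTop_atTop_of_one_lt (by norm_num))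

/-- Upper Beurling density `D_s⁺(Λ) = limsup_{h→∞} sup_x #(Λ ∩ B(x,h))/h^s` (valued in
`ℝ≥0∞`). -/
def beurlingDensity {d : ℕ} (s : ℝ) (Λ : Set (Fin d → ℝ)) : ENNReal :=
  Filter.limsup
    (fun h : ℝ => ⨆ x : Fin d → ℝ,
      ((Λ ∩ Metric.ball x h).encard : ENNReal) / ENNReal.ofReal (h ^ s))
    Filter.atTop

theorem growth_gives_maximal_beurling_dimension {d : ℕ} (hd : 0 < d)
    (Λ : ℕ → Finset (Fin d → ℝ)) (ρ α N : ℝ) (hρ : 1 < ρ) (hN : 2 ≤ N)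
    (hαN : ρ ^ α = N)
    (h : ℕ → ℝ) (hdef : ∀ k, h k = Real.sqrt d * ρ ^ (k * (k + 1) / 2 + 1 : ℕ))
    (hin : ∀ k, ∀ x ∈ Λ k, x ∈ Metric.ball 0 (h k))
    (hcard : ∀ k : ℕ, (N ^ (k * (k + 1) / 2 : ℕ) / ((Nat.factorial k : ℕ) : ℝ) ^ 5) ≤ (Λ k).card) :
    (∀ η > (0 : ℝ), ∀ M : ℝ,
      ∃ᶠ k in Filter.atTop, M ≤ ((Λ k).card : ℝ) / (h k) ^ (α - η)) ∧
    (∀ s : ℝ, s < α → 0 < beurlingDensity s (⋃ k, (Λ k : Set (Fin d → ℝ)))) := by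
  have hρ0 : (0:ℝ) < ρ := lt_trans one_pos hρ
  have hd1 : (1:ℝ) ≤ (d:ℝ) := by exact_mod_cast hd
  have hsd : (0:ℝ) < Real.sqrt d := Real.sqrt_pos.mpr (by linarith)
  have hhk : ∀ k, 0 < h k := by
    intro k; rw [hdef k]; positivity
  have main : ∀ η > (0 : ℝ), ∀ M : ℝ,
      ∃ᶠ k in Filter.atTop, M ≤ ((Λ k).card : ℝ) / (h k) ^ (α - η) := by
    intro η hη M
    set b : ℝ := ρ ^ η with hbdef
    have hb1 : 1 < b := (Real.one_lt_rpow_iff_of_pos hρ0).mpr (Or.inl ⟨hρ, hη⟩)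
    set C : ℝ := ρ ^ (η - α) / Real.sqrt d ^ (α - η) with hCdef
    have hC : 0 < C := by
      have := Real.rpow_pos_of_pos hρ0 (η - α)
      have := Real.rpow_pos_of_pos hsd (α - η)
      positivity
    have hbnd : ∀ k : ℕ, C * (b ^ (k * (k + 1) / 2) / ((Nat.factorial k : ℕ) : ℝ) ^ 5)
        ≤ ((Λ k).card : ℝ) / (h k) ^ (α - η) := by
      intro k
      set T : ℕ := k * (k + 1) / 2 with hT
      set F : ℝ := ((Nat.factorial k : ℕ) : ℝ) ^ 5 with hF
      have hFpos : 0 < F := by positivity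
      have hppos : 0 < (h k) ^ (α - η) := Real.rpow_pos_of_pos (hhk k) _
      have key : C * (b ^ T / F) = (N ^ T / F) / (h k) ^ (α - η) := by
        have eb : b ^ T = ρ ^ (η * (T:ℝ)) := by
          rw [hbdef, ← Real.rpow_natCast (ρ ^ η) T, ← Real.rpow_mul hρ0.le]
        have eN : (N:ℝ) ^ T = ρ ^ (α * (T:ℝ)) := by
          rw [← hαN, ← Real.rpow_natCast (ρ ^ α) T, ← Real.rpow_mul hρ0.le]
        have eh : (h k) ^ (α - η) =
            Real.sqrt d ^ (α - η) * ρ ^ (((T:ℝ) + 1) * (α - η)) := by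
          rw [hdef k, Real.mul_rpow hsd.le (by positivity), ← hT,
            ← Real.rpow_natCast ρ (T + 1), ← Real.rpow_mul hρ0.le]
          push_cast
          ring_nf
        have e1 : ρ ^ (η - α) * ρ ^ (η * (T:ℝ)) * ρ ^ (((T:ℝ) + 1) * (α - η))
            = ρ ^ (α * (T:ℝ)) := by
          rw [← Real.rpow_add hρ0, ← Real.rpow_add hρ0]
          congr 1; ring
        rw [eb, eN, eh, hCdef, ← e1]
        have hG : Real.sqrt d ^ (α - η) ≠ 0 := (Real.rpow_pos_of_pos hsd _).ne'
        have hR : ρ ^ (((T:ℝ) + 1) * (α - η)) ≠ 0 := (Real.rpow_pos_of_pos hρ0 _).ne'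
        field_simp
      have hN0 : (0:ℝ) < N := by linarith
      rw [key]
      gcongr
      exact hcard k
    have htd : Filter.Tendsto
        (fun k : ℕ => C * (b ^ (k * (k + 1) / 2) / ((Nat.factorial k : ℕ) : ℝ) ^ 5))
        Filter.atTop Filter.atTop :=
      (aux_tendsto_pow_tri_div_factorial hb1).const_mul_atTop hC
    have hev : ∀ᶠ k in Filter.atTop, M ≤ ((Λ k).card : ℝ) / (h k) ^ (α - η) := by
      filter_upwards [htd.eventually_ge_atTop M] with k hk
      exact hk.trans (hbnd k)
    exact hev.frequently
  refine ⟨main, ?_⟩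
  intro s hs
  have hfr := main (α - s) (by linarith) 1
  have hαη : α - (α - s) = s := by ring
  rw [hαη] at hfr
  have htend : Filter.Tendsto h Filter.atTop Filter.atTop := by
    have hexp : Filter.Tendsto (fun k : ℕ => k * (k + 1) / 2 + 1) Filter.atTop Filter.atTop := by
      refine Filter.tendsto_atTop_mono (fun k => ?_) Filter.tendsto_id
      show (id k : ℕ) ≤ k * (k + 1) / 2 + 1
      simp only [id]
      rcases Nat.eq_zero_or_pos k with hk | hk
      · simp [hk]
      · have h1 : k * 2 ≤ k * (k + 1) := Nat.mul_le_mul_left k (by omega)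
        have := (Nat.le_div_iff_mul_le (by norm_num)).mpr h1
        omega
    have h2 : Filter.Tendsto (fun k : ℕ => ρ ^ (k * (k + 1) / 2 + 1)) Filter.atTop Filter.atTop :=
      (tendsto_pow_atTop_atTop_of_one_lt hρ).comp hexp
    refine Filter.tendsto_atTop_mono (fun k => ?_) h2
    rw [hdef k]
    nlinarith [pow_pos hρ0 (k * (k + 1) / 2 + 1), hsd,
      Real.sq_sqrt (by linarith : (0:ℝ) ≤ (d:ℝ)), hd1,
      Real.sqrt_nonneg (d:ℝ), Real.one_le_sqrt.mpr hd1]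
  have hone : (1:ℝ≥0∞) ≤ beurlingDensity s (⋃ k, (Λ k : Set (Fin d → ℝ))) := by
    refine Filter.le_limsup_of_frequently_le ?_ (by isBoundedDefault)
    rw [Filter.frequently_atTop]
    intro H
    obtain ⟨k, hk1, hkH⟩ := (hfr.and_eventually (htend.eventually_ge_atTop H)).exists
    refine ⟨h k, hkH, ?_⟩
    refine le_trans ?_ (le_iSup _ 0)
    have hps : (0:ℝ) < (h k) ^ s := Real.rpow_pos_of_pos (hhk k) s
    have hb0 : ENNReal.ofReal ((h k) ^ s) ≠ 0 := (ENNReal.ofReal_pos.mpr hps).ne'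
    rw [ENNReal.le_div_iff_mul_le (Or.inl hb0) (Or.inl ENNReal.ofReal_ne_top), one_mul]
    have hreal : (h k) ^ s ≤ ((Λ k).card : ℝ) := by
      have := (one_le_div hps).mp hk1
      linarith
    calc ENNReal.ofReal ((h k) ^ s) ≤ ENNReal.ofReal ((Λ k).card : ℝ) :=
          ENNReal.ofReal_le_ofReal hreal
      _ = (((Λ k).card : ℕ∞) : ℝ≥0∞) := by
          rw [ENNReal.ofReal_natCast]; simp
      _ ≤ (((⋃ j, (Λ j : Set (Fin d → ℝ))) ∩ Metric.ball 0 (h k)).encard : ℝ≥0∞) := by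
          rw [ENat.toENNReal_le, ← Set.encard_coe_eq_coe_finsetCard]
          apply Set.encard_mono
          intro x hx
          exact ⟨Set.mem_iUnion.mpr ⟨k, hx⟩, hin k x hx⟩
  exact lt_of_lt_of_le zero_lt_one hone

end
end
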